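/- arXiv:2009.09375 — 3 statements merged into one kernel-verified Lean document; each statement's English description precedes it below -/
import Mathlib

section
/- For every complex character χ of G, the dimension of M(χ) equals s_q(a+b) if χ = 1_G and equals s_q(a+b−1) if χ ≠ 1_G, where s_q(n) denotes the number of subspaces of (F_q)^n. -/
/-!
Fix `φ` with `ker φ = H` and `φ u = 1`. The elements of `G` are exactly the transvections
`x ↦ x + φ x • h` with `h ∈ H`, so `G ≅ H` and `χ` becomes an additive character `ψ` of `H`.
Every subspace not contained in `H` is a `G`-translate of exactly one join `w ⊔ ⟨u⟩` with
`w ≤ H`, and the stabilizer of that join is `w`. Hence `M(χ)` has one dimension for each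
`w ≤ H` on which `ψ` is trivial, i.e. for each subspace of the largest subspace `W ⊆ ker ψ`;
and `W = H` if `χ = 1`, while `W` is a hyperplane of `H` otherwise, since every character of
`F_q` is a multiplicative shift of any nontrivial one.
-/
open Module

variable (F : Type) [Field F] [Fintype F] (n : ℕ)

noncomputable def Gsub (H : Submodule F (Fin n → F)) :
    Subgroup ((Fin n → F) ≃ₗ[F] (Fin n → F)) where
  carrier := {g | LinearEquiv.det g = 1 ∧ ∀ v ∈ H, g v = v}
  one_mem' := ⟨map_one _, fun v _ => rfl⟩
  mul_mem' := by
    rintro g h ⟨hg1, hg2⟩ ⟨hh1, hh2⟩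
    refine ⟨by rw [map_mul, hg1, hh1, one_mul], fun v hv => ?_⟩
    show g (h v) = v
    rw [hh2 v hv, hg2 v hv]
  inv_mem' := by
    rintro g ⟨hg1, hg2⟩
    refine ⟨by rw [map_inv, hg1, inv_one], fun v hv => ?_⟩
    show g.symm v = v
    conv_lhs => rw [← hg2 v hv]
    exact g.symm_apply_apply v

/-- The `χ`-homogeneous component of the span of the basis vectors indexed by `S`. -/
noncomputable def Mcomp (H : Submodule F (Fin n → F)) (χ : Gsub F n H →* ℂ)
    (S : Set (Submodule F (Fin n → F))) : Submodule ℂ (Submodule F (Fin n → F) → ℂ) where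
  carrier := {v | (∀ y, y ∉ S → v y = 0) ∧
      ∀ g : Gsub F n H, ∀ y : Submodule F (Fin n → F),
        v (Submodule.map (((g⁻¹ : Gsub F n H) : (Fin n → F) ≃ₗ[F] (Fin n → F)) :
            (Fin n → F) →ₗ[F] (Fin n → F)) y) = χ g * v y}
  zero_mem' := ⟨fun _ _ => rfl, fun g y => by simp⟩
  add_mem' := by
    rintro v w ⟨hv1, hv2⟩ ⟨hw1, hw2⟩
    refine ⟨fun y hy => by simp [hv1 y hy, hw1 y hy], fun g y => ?_⟩
    simp only [Pi.add_apply, hv2 g y, hw2 g y]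
    ring
  smul_mem' := by
    rintro c v ⟨hv1, hv2⟩
    refine ⟨fun y hy => by simp [hv1 y hy], fun g y => ?_⟩
    simp only [Pi.smul_apply, hv2 g y, smul_eq_mul]
    ring

/-- `s_q(n)`: the number of subspaces of `(F_q)^n`. -/
noncomputable def numSubspaces (F : Type) [Field F] [Fintype F] (n : ℕ) : ℕ :=
  Nat.card (Submodule F (Fin n → F))

section PermutationModule

variable {G X K : Type*} [Group G] [MulAction G X] [Field K]

def homogeneousComponent (χ : G →* K) (S : Set X) : Submodule K (X → K) where
  carrier := {v | (∀ x ∉ S, v x = 0) ∧ ∀ (g : G) (x : X), v (g⁻¹ • x) = χ g * v x}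
  zero_mem' := ⟨fun _ _ => rfl, fun _ _ => by simp⟩
  add_mem' := by
    rintro v w ⟨hv, hv'⟩ ⟨hw, hw'⟩
    exact ⟨fun x hx => by simp [hv x hx, hw x hx], fun g x => by simp [hv', hw', mul_add]⟩
  smul_mem' := by
    rintro c v ⟨hv, hv'⟩
    exact ⟨fun x hx => by simp [hv x hx], fun g x => by simp [hv', mul_left_comm]⟩

variable {χ : G →* K} {S : Set X} {v : X → K}

theorem apply_smul_of_mem_homogeneousComponent (hv : v ∈ homogeneousComponent χ S)
    (g : G) (x : X) : v (g • x) = χ g⁻¹ * v x := by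
  simpa using hv.2 g⁻¹ x

theorem apply_eq_zero_of_mem_homogeneousComponent (hv : v ∈ homogeneousComponent χ S)
    {g : G} {x : X} (hgx : g • x = x) (hχ : χ g ≠ 1) : v x = 0 := by
  have h := hv.2 g x
  rw [inv_smul_eq_iff.2 hgx.symm] at h
  have : (χ g - 1) * v x = 0 := by linear_combination -h
  exact (mul_eq_zero.1 this).resolve_left (sub_ne_zero.2 hχ)

/-- `σ` is a transversal of the `G`-orbits in `S`. -/
theorem finrank_homogeneousComponent {ι : Type*} [Finite ι] (σ : ι → X)
    (hσ : ∀ x, x ∈ S ↔ ∃ i, ∃ g : G, g • σ i = x)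
    (hσ_inj : ∀ i j (g : G), g • σ i = σ j → i = j) :
    finrank K (homogeneousComponent χ S) =
      Nat.card {i // ∀ g : G, g • σ i = σ i → χ g = 1} := by
  classical
  set ι' := {i // ∀ g : G, g • σ i = σ i → χ g = 1}
  let restrict : homogeneousComponent χ S →ₗ[K] ι' → K :=
    { toFun := fun v i => (v : X → K) (σ i)
      map_add' := fun _ _ => rfl
      map_smul' := fun _ _ => rfl }
  let extend (f : ι' → K) (x : X) : K :=
    if h : ∃ p : ι' × G, p.2 • σ p.1 = x then χ h.choose.2⁻¹ * f h.choose.1 else 0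
  have extend_smul (f : ι' → K) (i : ι') (g : G) : extend f (g • σ i) = χ g⁻¹ * f i := by
    have h : ∃ p : ι' × G, p.2 • σ p.1 = g • σ i := ⟨(i, g), rfl⟩
    obtain ⟨⟨j, g'⟩, hp, hjg⟩ : ∃ p, h.choose = p ∧ p.2 • σ p.1 = g • σ i :=
      ⟨_, rfl, h.choose_spec⟩
    obtain rfl : j = i :=
      Subtype.ext (hσ_inj j i (g⁻¹ * g') (by rw [mul_smul, hjg, inv_smul_smul]))
    have hstab : (g'⁻¹ * g) • σ j = σ j := by rw [mul_smul, ← hjg, inv_smul_smul]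
    simp only [extend, dif_pos h, hp]
    rw [show g'⁻¹ = (g'⁻¹ * g) * g⁻¹ by group, map_mul, j.2 _ hstab, one_mul]
  have extend_of_not (f : ι' → K) (x : X) (hx : ¬ ∃ p : ι' × G, p.2 • σ p.1 = x) :
      extend f x = 0 := dif_neg hx
  have extend_mem (f : ι' → K) : extend f ∈ homogeneousComponent χ S := by
    refine ⟨fun x hx => extend_of_not f x ?_, fun h x => ?_⟩
    · rintro ⟨⟨i, g⟩, rfl⟩
      exact hx ((hσ _).2 ⟨i, g, rfl⟩)
    by_cases hx : ∃ p : ι' × G, p.2 • σ p.1 = x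
    · obtain ⟨⟨i, g⟩, rfl⟩ := hx
      rw [← mul_smul, extend_smul, extend_smul, mul_inv_rev, inv_inv, map_mul]
      ring
    · rw [extend_of_not f x hx, extend_of_not f _ ?_, mul_zero]
      rintro ⟨⟨i, g⟩, hg⟩
      exact hx ⟨(i, h * g), by rw [mul_smul, hg, smul_inv_smul]⟩
  have bijective : Function.Bijective restrict := by
    refine ⟨fun v w hvw => ?_, fun f => ⟨⟨extend f, extend_mem f⟩, funext fun i => ?_⟩⟩
    · rw [← sub_eq_zero] at hvw ⊢
      set d := v - w
      ext x
      by_cases hx : x ∈ S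
      · obtain ⟨i, g, rfl⟩ := (hσ x).1 hx
        rw [apply_smul_of_mem_homogeneousComponent d.2]
        by_cases hi : ∀ g : G, g • σ i = σ i → χ g = 1
        · simp [show (d : X → K) (σ i) = 0 from congr_fun hvw ⟨i, hi⟩]
        · push Not at hi
          obtain ⟨g', hg', hχ⟩ := hi
          simp [apply_eq_zero_of_mem_homogeneousComponent d.2 hg' hχ]
      · exact d.2.1 x hx
    · simpa [restrict] using extend_smul f i 1
  have : Fintype ι' := Fintype.ofFinite ι'
  rw [(LinearEquiv.ofBijective restrict bijective).finrank_eq, finrank_fintype_fun_eq_card,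
    Nat.card_eq_fintype_card]

end PermutationModule

namespace AddChar

variable {F E M : Type*} [Field F] [AddCommGroup E] [Module F E] [CommMonoid M]

theorem exists_mulShift_eq [Fintype F] {β : AddChar F ℂ} (hβ : β ≠ 1) (α : AddChar F ℂ) :
    ∃ c, β.mulShift c = α := by
  classical
  have hinj := to_mulShift_inj_of_isPrimitive (IsPrimitive.of_ne_one hβ)
  exact ((Fintype.bijective_iff_injective_and_card _).2 ⟨hinj, card_eq.symm⟩).2 α

variable (F) in
def kerSubmodule (ψ : AddChar E M) : Submodule F E where
  carrier := {x | ∀ c : F, ψ (c • x) = 1}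
  add_mem' {x y} hx hy c := by rw [smul_add, map_add_eq_mul, hx, hy, one_mul]
  zero_mem' c := by rw [smul_zero, map_zero_eq_one]
  smul_mem' c x hx d := by rw [smul_smul]; exact hx (d * c)

theorem le_kerSubmodule_iff {ψ : AddChar E M} {p : Submodule F E} :
    p ≤ ψ.kerSubmodule F ↔ ∀ x ∈ p, ψ x = 1 :=
  ⟨fun hp x hx => by simpa using hp hx 1, fun hp x hx c => hp _ (p.smul_mem c hx)⟩

@[simp]
theorem kerSubmodule_one : (1 : AddChar E M).kerSubmodule F = ⊤ :=
  eq_top_iff.2 <| le_kerSubmodule_iff.2 fun _ _ => rfl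

theorem finrank_kerSubmodule_add_one [Fintype F] [FiniteDimensional F E] {ψ : AddChar E ℂ}
    (hψ : ψ ≠ 1) : finrank F (ψ.kerSubmodule F) + 1 = finrank F E := by
  obtain ⟨x₁, hx₁⟩ : ∃ x₁, ψ x₁ ≠ 1 := by
    by_contra! h
    exact hψ (by ext x; exact h x)
  let β : AddChar F ℂ := ψ.compAddMonoidHom (LinearMap.toSpanSingleton F E x₁).toAddMonoidHom
  have hβ : β ≠ 1 := fun h => hx₁ (by simpa [β] using DFunLike.congr_fun h 1)
  have hx₁K : x₁ ∉ ψ.kerSubmodule F := fun h => hx₁ (by simpa using h 1)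
  have hsup : ψ.kerSubmodule F ⊔ Submodule.span F {x₁} = ⊤ := by
    refine eq_top_iff.2 fun x _ => ?_
    obtain ⟨c, hc⟩ := exists_mulShift_eq hβ
      (ψ.compAddMonoidHom (LinearMap.toSpanSingleton F E x).toAddMonoidHom)
    have hxc : x - c • x₁ ∈ ψ.kerSubmodule F := fun d => by
      have := DFunLike.congr_fun hc d
      simp only [mulShift_apply, compAddMonoidHom_apply, LinearMap.toAddMonoidHom_coe,
        LinearMap.toSpanSingleton_apply, β] at this
      rw [smul_sub, sub_eq_add_neg, map_add_eq_mul, ← this, smul_smul, mul_comm d c,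
        ← map_add_eq_mul, add_neg_cancel, map_zero_eq_one]
    rw [← sub_add_cancel x (c • x₁)]
    exact Submodule.add_mem_sup hxc
      (Submodule.smul_mem _ c (Submodule.mem_span_singleton_self x₁))
  have hx₁0 : x₁ ≠ 0 := fun h => hx₁ (by rw [h, map_zero_eq_one])
  rw [← finrank_span_singleton (K := F) hx₁0, Submodule.finrank_add_eq_of_isCompl
    ⟨Submodule.disjoint_span_singleton_of_notMem hx₁K, codisjoint_iff.2 hsup⟩]

end AddChar

section Hyperplane

open Submodule

variable {F V : Type*} [Field F] [AddCommGroup V] [Module F V]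

theorem exists_dual_ker_eq_of_finrank_add_one [FiniteDimensional F V] {H : Submodule F V}
    (hH : finrank F H + 1 = finrank F V) :
    ∃ (φ : Dual F V) (u : V), φ u = 1 ∧ LinearMap.ker φ = H := by
  have hH' : H ≠ ⊤ := fun h => by rw [h, finrank_top] at hH; omega
  obtain ⟨u, -, hu⟩ := SetLike.exists_of_lt hH'.lt_top
  obtain ⟨f, hfu, hfH⟩ := exists_dual_map_eq_bot_of_notMem hu inferInstance
  have hker : H ≤ LinearMap.ker f := LinearMap.le_ker_iff_map.2 hfH
  have hlt : finrank F (LinearMap.ker f) < finrank F V :=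
    finrank_lt fun h => hfu (LinearMap.ker_eq_top.1 h ▸ rfl)
  refine ⟨(f u)⁻¹ • f, u, by simp [hfu], ?_⟩
  rw [LinearMap.ker_smul _ _ (inv_ne_zero hfu)]
  exact (eq_of_le_of_finrank_le hker (by omega)).symm

def join (p : Submodule F V) (u : V) (w : Submodule F p) : Submodule F V :=
  w.map p.subtype ⊔ span F {u}

variable {φ : Dual F V} {u : V}

theorem not_join_le_ker (hu : φ u ≠ 0) (w : Submodule F (LinearMap.ker φ)) :
    ¬ join (LinearMap.ker φ) u w ≤ LinearMap.ker φ :=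
  fun h => hu (h (mem_sup_right (mem_span_singleton_self u)))

theorem comap_subtype_join (hu : φ u = 1) (w : Submodule F (LinearMap.ker φ)) :
    (join (LinearMap.ker φ) u w).comap (LinearMap.ker φ).subtype = w := by
  refine le_antisymm (fun x hx => ?_) fun x hx => mem_sup_left (mem_map_of_mem hx)
  obtain ⟨_, ⟨y, hy, rfl⟩, z, hz, hyz⟩ := mem_sup.1 (mem_comap.1 hx)
  obtain ⟨c, rfl⟩ := mem_span_singleton.1 hz
  have hc : c = 0 := by
    simpa [hu, LinearMap.mem_ker.1 y.2, LinearMap.mem_ker.1 x.2] using congr_arg φ hyz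
  rw [hc, zero_smul, add_zero] at hyz
  rwa [← Subtype.ext hyz]

theorem join_add_of_mem {p : Submodule F V} {w : Submodule F p} {h : p} (hh : h ∈ w) :
    join p (u + h) w = join p u w := by
  have hh' : (h : V) ∈ w.map p.subtype := mem_map_of_mem hh
  refine le_antisymm (sup_le le_sup_left ?_) (sup_le le_sup_left ?_) <;>
    rw [span_singleton_le_iff_mem, join]
  · exact add_mem (mem_sup_right (mem_span_singleton_self u)) (mem_sup_left hh')
  · simpa using sub_mem (mem_sup_right (mem_span_singleton_self (u + h))) (mem_sup_left hh')

theorem map_eq_self_of_forall_eq {q : Submodule F V} (g : V →ₗ[F] V) (hg : ∀ x ∈ q, g x = x) :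
    q.map g = q := by
  ext x
  refine ⟨?_, fun hx => ⟨x, hx, hg x hx⟩⟩
  rintro ⟨y, hy, rfl⟩
  rwa [hg y hy]

theorem map_transvection_join (hu : φ u = 1) (h : LinearMap.ker φ)
    (w : Submodule F (LinearMap.ker φ)) :
    (join (LinearMap.ker φ) u w).map (LinearMap.transvection φ h) =
      join (LinearMap.ker φ) (u + h) w := by
  rw [join, join, Submodule.map_sup, map_span, Set.image_singleton, LinearMap.transvection.apply,
    hu, one_smul, map_eq_self_of_forall_eq _ fun x hx => ?_]
  rw [LinearMap.transvection.apply, LinearMap.mem_ker.1 (map_subtype_le _ w hx), zero_smul,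
    add_zero]

theorem map_transvection_join_eq_iff (hu : φ u = 1) (h : LinearMap.ker φ)
    (w : Submodule F (LinearMap.ker φ)) :
    (join (LinearMap.ker φ) u w).map (LinearMap.transvection φ h) = join (LinearMap.ker φ) u w ↔
      h ∈ w := by
  rw [map_transvection_join hu]
  refine ⟨fun heq => ?_, join_add_of_mem⟩
  have huh : u + h ∈ join (LinearMap.ker φ) u w :=
    heq ▸ mem_sup_right (mem_span_singleton_self _)
  rw [← comap_subtype_join hu w, mem_comap, subtype_apply]
  simpa using sub_mem huh (mem_sup_right (mem_span_singleton_self u))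

theorem exists_map_transvection_join (hu : φ u = 1) {y : Submodule F V}
    (hy : ¬ y ≤ LinearMap.ker φ) :
    ∃ h : LinearMap.ker φ, (join (LinearMap.ker φ) u (y.comap (LinearMap.ker φ).subtype)).map
      (LinearMap.transvection φ h) = y := by
  obtain ⟨v, hvy, hv⟩ := SetLike.not_le_iff_exists.1 hy
  replace hv : φ v ≠ 0 := hv
  set v' := (φ v)⁻¹ • v
  have hv' : φ v' = 1 := by simp [v', hv]
  have hv'y : v' ∈ y := y.smul_mem _ hvy
  refine ⟨⟨v' - u, by simp [hv', hu]⟩, ?_⟩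
  rw [map_transvection_join hu, add_sub_cancel, join, map_comap_subtype]
  refine le_antisymm (sup_le inf_le_right ((span_singleton_le_iff_mem _ _).2 hv'y)) fun x hx => ?_
  rw [← sub_add_cancel x (φ x • v')]
  refine add_mem_sup ⟨?_, sub_mem hx (y.smul_mem _ hv'y)⟩
    (smul_mem _ _ (mem_span_singleton_self v'))
  simp [hv']

theorem comap_subtype_map_of_forall_eq {p : Submodule F V} (g : V ≃ₗ[F] V)
    (hg : ∀ x ∈ p, g x = x) (y : Submodule F V) :
    (y.map (g : V →ₗ[F] V)).comap p.subtype = y.comap p.subtype := by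
  ext x
  rw [mem_comap, mem_comap, mem_map_equiv, subtype_apply, g.symm_apply_eq.2 (hg x x.2).symm]

end Hyperplane

section Transvections

variable {F V : Type*} [Field F] [AddCommGroup V] [Module F V]

def transvectionHom (φ : Dual F V) : Multiplicative (LinearMap.ker φ) →* (V ≃ₗ[F] V) where
  toFun h := LinearEquiv.transvection (LinearMap.mem_ker.1 h.toAdd.2)
  map_one' := LinearEquiv.transvection.of_right_eq_zero φ
  map_mul' h h' := (LinearEquiv.transvection.trans_of_left_eq (LinearMap.mem_ker.1 h.toAdd.2)
    (LinearMap.mem_ker.1 h'.toAdd.2) (LinearMap.mem_ker.1 (h * h').toAdd.2)).symm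

variable {φ : Dual F V} {u : V}

@[simp]
theorem transvectionHom_apply (h : Multiplicative (LinearMap.ker φ)) (x : V) :
    transvectionHom φ h x = x + φ x • (h.toAdd : V) :=
  rfl

theorem transvectionHom_injective (hu : φ u = 1) : Function.Injective (transvectionHom φ) := by
  intro h h' hh
  have := LinearEquiv.congr_fun hh u
  simp only [transvectionHom_apply, hu, one_smul, add_right_inj] at this
  exact Multiplicative.toAdd.injective (Subtype.ext this)

theorem eq_transvection_of_forall_ker (hu : φ u = 1) {g : V →ₗ[F] V}
    (hg : ∀ x ∈ LinearMap.ker φ, g x = x) : g = LinearMap.transvection φ (g u - u) := by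
  ext x
  have hx : x - φ x • u ∈ LinearMap.ker φ := by simp [hu]
  have hgx := hg _ hx
  rw [map_sub, map_smul] at hgx
  rw [LinearMap.transvection.apply, smul_sub]
  linear_combination (norm := module) hgx

end Transvections

theorem card_submodule_le_eq_numSubspaces {F E : Type} [Field F] [Fintype F] [AddCommGroup E]
    [Module F E] (K : Submodule F E) [FiniteDimensional F K] :
    Nat.card {w : Submodule F E // w ≤ K} = numSubspaces F (finrank F K) :=
  Nat.card_congr <| (Submodule.MapSubtype.orderIso K).symm.toEquiv.trans
    (Submodule.orderIsoMapComap (LinearEquiv.ofFinrankEq K _ (finrank_fin_fun F).symm)).toEquiv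

section Main

open scoped Pointwise

variable {F : Type} [Field F] {n : ℕ} {φ : Dual F (Fin n → F)} {u : Fin n → F}

theorem range_transvectionHom (hu : φ u = 1) :
    (transvectionHom φ).range = Gsub F n (LinearMap.ker φ) := by
  ext g
  refine ⟨?_, fun ⟨hdet, hfix⟩ => ?_⟩
  · rintro ⟨h, rfl⟩
    exact ⟨LinearEquiv.transvection.det_eq_one (LinearMap.mem_ker.1 h.toAdd.2),
      fun x hx => by simp [LinearMap.mem_ker.1 hx]⟩
  have hg := eq_transvection_of_forall_ker hu hfix
  have hker : φ (g u - u) = 0 := by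
    have := congr_arg Units.val hdet
    rw [LinearEquiv.coe_det, hg, LinearMap.transvection.det] at this
    simpa using this
  exact ⟨Multiplicative.ofAdd ⟨_, hker⟩, LinearEquiv.toLinearMap_injective hg.symm⟩

noncomputable def transvectionEquiv (hu : φ u = 1) :
    Multiplicative (LinearMap.ker φ) ≃* Gsub F n (LinearMap.ker φ) :=
  (MonoidHom.ofInjective (transvectionHom_injective hu)).trans
    (MulEquiv.subgroupCongr (range_transvectionHom hu))

theorem transvectionEquiv_smul (hu : φ u = 1) (h : Multiplicative (LinearMap.ker φ))
    (y : Submodule F (Fin n → F)) :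
    transvectionEquiv hu h • y = y.map (LinearMap.transvection φ h.toAdd) :=
  rfl

noncomputable def transvectionChar (hu : φ u = 1) (χ : Gsub F n (LinearMap.ker φ) →* ℂ) :
    AddChar (LinearMap.ker φ) ℂ :=
  AddChar.toMonoidHomEquiv.symm (χ.comp (transvectionEquiv hu).toMonoidHom)

theorem transvectionChar_apply (hu : φ u = 1) (χ : Gsub F n (LinearMap.ker φ) →* ℂ)
    (h : LinearMap.ker φ) : transvectionChar hu χ h = χ (transvectionEquiv hu (.ofAdd h)) :=
  rfl

theorem transvectionChar_eq_one_iff (hu : φ u = 1) {χ : Gsub F n (LinearMap.ker φ) →* ℂ} :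
    transvectionChar hu χ = 1 ↔ χ = 1 := by
  refine ⟨fun hχ => MonoidHom.ext fun g => ?_, fun hχ => hχ ▸ rfl⟩
  obtain ⟨h, rfl⟩ := (transvectionEquiv hu).surjective g
  exact DFunLike.congr_fun hχ h.toAdd

theorem finrank_Mcomp [Fintype F] (hu : φ u = 1) (χ : Gsub F n (LinearMap.ker φ) →* ℂ) :
    finrank ℂ (Mcomp F n (LinearMap.ker φ) χ {y | ¬ y ≤ LinearMap.ker φ}) =
      numSubspaces F (finrank F ((transvectionChar hu χ).kerSubmodule F)) := by
  change finrank ℂ (homogeneousComponent χ _) = _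
  rw [finrank_homogeneousComponent (join (LinearMap.ker φ) u),
    ← card_submodule_le_eq_numSubspaces]
  · refine Nat.card_congr (Equiv.subtypeEquivRight fun w => ?_)
    rw [AddChar.le_kerSubmodule_iff, (transvectionEquiv hu).surjective.forall,
      Multiplicative.ofAdd.surjective.forall]
    simp only [transvectionEquiv_smul, toAdd_ofAdd, map_transvection_join_eq_iff hu,
      transvectionChar_apply]
  · intro y
    refine ⟨fun hy => ?_, ?_⟩
    · obtain ⟨h, hh⟩ := exists_map_transvection_join hu hy
      exact ⟨_, transvectionEquiv hu (.ofAdd h), hh⟩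
    · rintro ⟨w, g, rfl⟩
      obtain ⟨h, rfl⟩ := (transvectionEquiv hu).surjective g
      rw [transvectionEquiv_smul, map_transvection_join hu]
      exact not_join_le_ker (by simp [hu]) w
  · intro w w' g hg
    rw [← comap_subtype_join hu w, ← comap_subtype_join hu w', ← hg]
    exact (comap_subtype_map_of_forall_eq _ g.2.2 _).symm

end Main

theorem dim_Mchi_general (F : Type) [Field F] [Fintype F] (a b : ℕ)
    (H : Submodule F (Fin (a + b + 1) → F))
    (hH : finrank F H = a + b)
    (χ : Gsub F (a + b + 1) H →* ℂ) :
    (χ = 1 →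
      finrank ℂ (Mcomp F (a + b + 1) H χ {y | ¬ y ≤ H}) = numSubspaces F (a + b))
    ∧ (χ ≠ 1 →
      finrank ℂ (Mcomp F (a + b + 1) H χ {y | ¬ y ≤ H}) = numSubspaces F (a + b - 1)) := by
  obtain ⟨φ, u, hu, rfl⟩ :=
    exists_dual_ker_eq_of_finrank_add_one (by rw [hH, finrank_fin_fun] : finrank F H + 1 = _)
  rw [finrank_Mcomp hu]
  refine ⟨fun hχ => ?_, fun hχ => ?_⟩
  · rw [(transvectionChar_eq_one_iff hu).2 hχ, AddChar.kerSubmodule_one, finrank_top, hH]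
  · have hW := AddChar.finrank_kerSubmodule_add_one (F := F)
      ((transvectionChar_eq_one_iff hu).not.2 hχ)
    rw [hH] at hW
    rw [show finrank F ((transvectionChar hu χ).kerSubmodule F) = a + b - 1 by omega]

/-- the dimension of the homogeneous component `M(χ)` of `ℂP̃₁`
equals `s_q(a+b)` if `χ = 1_G` and `s_q(a+b-1)` otherwise. -/
theorem dim_Mchi (F : Type) [Field F] [Fintype F] (a b : ℕ)
    (x H : Submodule F (Fin (a + b + 1) → F))
    (hx : finrank F x = a) (hH : finrank F H = a + b) (hxH : x ≤ H)
    (χ : Gsub F (a + b + 1) H →* ℂ) :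
    (χ = 1 →
      finrank ℂ (Mcomp F (a + b + 1) H χ {y | ¬ y ≤ H}) = numSubspaces F (a + b))
    ∧ (χ ≠ 1 →
      finrank ℂ (Mcomp F (a + b + 1) H χ {y | ¬ y ≤ H}) = numSubspaces F (a + b - 1)) :=
  dim_Mchi_general F a b H hH χ
end

section
/- Suppose d > 0 and let h, r, r′, s, λ₀ be complex parameters admissible both for (h, r, s, λ₀) and for (h, r′, s, λ₀). Then there exists an invertible (d+1)×(d+1) complex diagonal matrix S such that S⁻¹ A(q,d;h,r,s,λ₀) S = A(q,d;h,r′,s,λ₀) if and only if r = r′, in which case any such S is a nonzero scalar multiple of the identity matrix. -/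
/-- The off-diagonal entry `b_i = h(1-q^{i-d})(1-rq^{i+1})`. -/
noncomputable def bEnt (q : ℂ) (d : ℕ) (h r : ℂ) (i : ℕ) : ℂ :=
  h * (1 - q ^ ((i : ℤ) - (d : ℤ))) * (1 - r * q ^ (i + 1))

/-- The off-diagonal entry `c_i = hsq(1-q^i)(1-rq^{i-d-1}/s)`. -/
noncomputable def cEnt (q : ℂ) (d : ℕ) (h r s : ℂ) (i : ℕ) : ℂ :=
  h * s * q * (1 - q ^ i) * (1 - r * q ^ ((i : ℤ) - (d : ℤ) - 1) / s)

/-- The `(d+1) × (d+1)` tridiagonal matrix `A(q,d;h,r,s,λ₀)`: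
superdiagonal entries `b_i`, subdiagonal entries `c_i`, and diagonal entries
`a_i = λ₀ - b_i - c_i`. -/
noncomputable def stdMat (q : ℂ) (d : ℕ) (h r s lam0 : ℂ) :
    Matrix (Fin (d + 1)) (Fin (d + 1)) ℂ := fun i j =>
  if (j : ℕ) = (i : ℕ) + 1 then bEnt q d h r i
  else if (i : ℕ) = (j : ℕ) + 1 then cEnt q d h r s i
  else if i = j then lam0 - bEnt q d h r i - cEnt q d h r s i
  else 0

/-- Admissibility of the parameters `(h, r, s, λ₀)`:
`h, r, s ≠ 0`, `rq^i ≠ 1` and `sq^i/r ≠ 1` for `1 ≤ i ≤ d`, and `sq^i ≠ 1`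
for `2 ≤ i ≤ 2d`. -/
def Admissible (q : ℂ) (d : ℕ) (h r s : ℂ) : Prop :=
  h ≠ 0 ∧ r ≠ 0 ∧ s ≠ 0 ∧
    (∀ i : ℕ, 1 ≤ i → i ≤ d → r * q ^ i ≠ 1 ∧ s * q ^ i / r ≠ 1) ∧
    (∀ i : ℕ, 2 ≤ i → i ≤ 2 * d → s * q ^ i ≠ 1)


lemma qpow_sub_ne_one {q : ℕ} (hq : 2 ≤ q) {d i : ℕ} (hid : i < d) :
    (1 : ℂ) - (q : ℂ) ^ ((i : ℤ) - (d : ℤ)) ≠ 0 := by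
  have hq0 : (q : ℂ) ≠ 0 := Nat.cast_ne_zero.mpr (by omega)
  intro hc
  have h1 : (q : ℂ) ^ ((i : ℤ) - (d : ℤ)) = 1 := (sub_eq_zero.mp hc).symm
  rw [zpow_sub₀ hq0, div_eq_one_iff_eq (zpow_ne_zero _ hq0), zpow_natCast,
    zpow_natCast] at h1
  have h2 : q ^ i = q ^ d := by exact_mod_cast h1
  have h3 : q ^ i < q ^ d := Nat.pow_lt_pow_right (by omega) hid
  omega

/-- for `d > 0`, there is an invertible diagonal matrix `S` with
`S⁻¹ A(q,d;h,r,s,λ₀) S = A(q,d;h,r',s,λ₀)` iff `r = r'`, in which case any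
such `S` is a nonzero scalar multiple of the identity. -/
theorem diag_conjugation_iff (q : ℕ) (hq : IsPrimePow q) (d : ℕ) (hd : 0 < d)
    (h r r' s lam0 : ℂ)
    (hadm : Admissible (q : ℂ) d h r s) (hadm' : Admissible (q : ℂ) d h r' s) :
    ((∃ S : Matrix (Fin (d + 1)) (Fin (d + 1)) ℂ, S.IsDiag ∧ IsUnit S ∧
        S⁻¹ * stdMat (q : ℂ) d h r s lam0 * S = stdMat (q : ℂ) d h r' s lam0) ↔ r = r')
      ∧ ∀ S : Matrix (Fin (d + 1)) (Fin (d + 1)) ℂ, S.IsDiag → IsUnit S →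
          S⁻¹ * stdMat (q : ℂ) d h r s lam0 * S = stdMat (q : ℂ) d h r' s lam0 →
          ∃ c : ℂ, c ≠ 0 ∧ S = c • (1 : Matrix (Fin (d + 1)) (Fin (d + 1)) ℂ) := by

  obtain ⟨hh, hr, hs, hri, hsi⟩ := hadm
  have hq2 : 2 ≤ q := hq.two_le
  have hq0 : (q : ℂ) ≠ 0 := Nat.cast_ne_zero.mpr (by omega)
  have main : ∀ S : Matrix (Fin (d + 1)) (Fin (d + 1)) ℂ, S.IsDiag → IsUnit S →
      S⁻¹ * stdMat (q : ℂ) d h r s lam0 * S = stdMat (q : ℂ) d h r' s lam0 →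
      r = r' ∧ ∃ c : ℂ, c ≠ 0 ∧ S = c • (1 : Matrix (Fin (d + 1)) (Fin (d + 1)) ℂ) := by
    intro S hSd hSu heq
    have hdet : IsUnit S.det := (Matrix.isUnit_iff_isUnit_det S).mp hSu
    have hAS : stdMat (q : ℂ) d h r s lam0 * S = S * stdMat (q : ℂ) d h r' s lam0 := by
      calc stdMat (q : ℂ) d h r s lam0 * S
          = (S * S⁻¹) * (stdMat (q : ℂ) d h r s lam0 * S) := by
            rw [Matrix.mul_nonsing_inv _ hdet, one_mul]
        _ = S * (S⁻¹ * stdMat (q : ℂ) d h r s lam0 * S) := by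
            rw [Matrix.mul_assoc, Matrix.mul_assoc]
        _ = S * stdMat (q : ℂ) d h r' s lam0 := by rw [heq]
    have key : ∀ i j, stdMat (q : ℂ) d h r s lam0 i j * S j j
        = S i i * stdMat (q : ℂ) d h r' s lam0 i j := by
      intro i j
      have h1 := congrFun (congrFun hAS i) j
      rw [Matrix.mul_apply, Matrix.mul_apply,
        Finset.sum_eq_single j (fun k _ hk => by rw [hSd hk, mul_zero]) (by simp),
        Finset.sum_eq_single i (fun k _ hk => by rw [hSd (Ne.symm hk), zero_mul]) (by simp)] at h1
      exact h1
    have hSne : ∀ i, S i i ≠ 0 := by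
      intro i hi
      apply hdet.ne_zero
      apply Matrix.det_eq_zero_of_row_eq_zero i
      intro j
      rcases eq_or_ne i j with rfl | hij
      · exact hi
      · exact hSd hij
    have hbne : ∀ n : ℕ, n < d → bEnt (q : ℂ) d h r n ≠ 0 := by
      intro n hn
      refine mul_ne_zero (mul_ne_zero hh (qpow_sub_ne_one hq2 hn)) ?_
      intro hc
      exact (hri (n + 1) (by omega) (by omega)).1 (sub_eq_zero.mp hc).symm
    have hrr : r = r' := by
      have h00 := key 0 0
      have e0 : ((0 : Fin (d + 1)) : ℕ) = 0 := rfl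
      simp only [stdMat, e0, cEnt, pow_zero, sub_self, mul_zero, zero_mul] at h00
      norm_num at h00
      have h1 : (lam0 - bEnt (q : ℂ) d h r 0) = (lam0 - bEnt (q : ℂ) d h r' 0) := by
        have := h00
        rw [mul_comm] at this
        exact mul_left_cancel₀ (hSne 0) this
      have h2 : bEnt (q : ℂ) d h r 0 = bEnt (q : ℂ) d h r' 0 := by
        linear_combination -h1
      unfold bEnt at h2
      have h3 : 1 - r * (q : ℂ) ^ (0 + 1) = 1 - r' * (q : ℂ) ^ (0 + 1) :=
        mul_left_cancel₀ (mul_ne_zero hh (qpow_sub_ne_one hq2 hd)) h2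
      have h4 : r * (q : ℂ) ^ (0 + 1) = r' * (q : ℂ) ^ (0 + 1) := by
        linear_combination -h3
      exact mul_right_cancel₀ (pow_ne_zero _ hq0) h4
    refine ⟨hrr, S 0 0, hSne 0, ?_⟩
    have hstep : ∀ n : ℕ, (hn : n + 1 < d + 1) →
        S ⟨n + 1, hn⟩ ⟨n + 1, hn⟩ = S ⟨n, by omega⟩ ⟨n, by omega⟩ := by
      intro n hn
      have hk := key ⟨n, by omega⟩ ⟨n + 1, hn⟩
      have eb : ∀ r0 : ℂ, stdMat (q : ℂ) d h r0 s lam0 ⟨n, by omega⟩ ⟨n + 1, hn⟩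
          = bEnt (q : ℂ) d h r0 n := by
        intro r0; simp [stdMat]
      rw [eb, eb, ← hrr] at hk
      exact mul_left_cancel₀ (hbne n (by omega)) (hk.trans (mul_comm _ _))
    have hall : ∀ n : ℕ, (hn : n < d + 1) → S ⟨n, hn⟩ ⟨n, hn⟩ = S 0 0 := by
      intro n
      induction n with
      | zero => intro hn; rfl
      | succ k ih => intro hn; rw [hstep k hn]; exact ih (by omega)
    ext i j
    rcases eq_or_ne i j with rfl | hij
    · rw [Matrix.smul_apply, Matrix.one_apply_eq, smul_eq_mul, mul_one]
      have := hall i.val i.isLt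
      simpa using this
    · rw [hSd hij, Matrix.smul_apply, Matrix.one_apply_ne hij, smul_eq_mul, mul_zero]
  constructor
  · constructor
    · rintro ⟨S, hSd, hSu, heq⟩; exact (main S hSd hSu heq).1
    · rintro rfl
      exact ⟨1, Matrix.isDiag_one, isUnit_one, by rw [inv_one, one_mul, Matrix.mul_one]⟩
  · intro S hSd hSu heq; exact (main S hSd hSu heq).2
end

section
/- In the twisted Grassmann graph J̃_q(2D+1,D), for all vertices y, z ∈ X and every integer i with 0 ≤ i ≤ D, the graph distance between y and z equals i if and only if dim y + dim z − 2 dim(y ∩ z) = 2i. In particular, J̃_q(2D+1,D) is connected with diameter D. -/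
open Module

/-!
The subspace distance `d(y, z) = dim y + dim z - 2 dim (y ∩ z) = dim (y + z) - dim (y ∩ z)` is a
metric, and adjacency in `J̃_q(2D+1, D)` means `d = 2`; hence a walk of length `n` joins only
vertices with `d ≤ 2n`. Conversely, for vertices `x ≠ y` pick `x ∩ y ≤ x' ≤ x` and
`x ∩ y ≤ y' ≤ y` with `(dim x - dim x') + (dim y' - dim (x ∩ y)) = 2`: by modularity
`w = x' + y'` meets `x` in `x'` and `y` in `y'`, so `d(x, w) = 2` and `d(w, y) = d(x, y) - 2`.
According as `x` and `y` lie in `X'` or `X''`, the codimensions `(1, 1)`, `(2, 0)` or `(0, 2)`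
and the choice of `x', y'` with respect to `H` make `w` a vertex again. So the graph distance is
`d / 2 ≤ dim (y + z) / 2 ≤ D`, with equality for a `(D+1)`-space meeting a `(D-1)`-subspace of
`H` trivially.
-/

/-- The vertex set `X = X' ⊔ X''` of the twisted Grassmann graph: the
`(D+1)`-dimensional subspaces of `(F_q)^{2D+1}` not contained in the fixed
hyperplane `H`, together with the `(D-1)`-dimensional subspaces of `H`. -/
def TGVertex (F : Type) [Field F] (D : ℕ) (H : Submodule F (Fin (2 * D + 1) → F)) : Type :=
  {y : Submodule F (Fin (2 * D + 1) → F) //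
    (finrank F y = D + 1 ∧ ¬y ≤ H) ∨ (finrank F y = D - 1 ∧ y ≤ H)}

/-- The twisted Grassmann graph `J̃_q(2D+1, D)`: vertices `y, z` are adjacent
iff `dim y + dim z - 2 dim(y ∩ z) = 2`. -/
def twistedGrassmann (F : Type) [Field F] (D : ℕ)
    (H : Submodule F (Fin (2 * D + 1) → F)) : SimpleGraph (TGVertex F D H) where
  Adj y z := finrank F y.1 + finrank F z.1 = 2 * finrank F ↥(y.1 ⊓ z.1) + 2
  symm := by
    constructor
    intro y z hyz
    try beta_reduce at hyz ⊢
    rw [inf_comm] at hyz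
    omega
  loopless := by
    constructor
    intro y hy
    try beta_reduce at hy
    rw [inf_idem] at hy
    omega

namespace SimpleGraph

variable {V : Type*} {G : SimpleGraph V} {f : V → V → ℕ} {c : ℕ}

theorem le_mul_length_of_adj (hself : ∀ x, f x x = 0)
    (hadj : ∀ x y z, G.Adj x y → f x z ≤ c + f y z) {x y : V} (p : G.Walk x y) :
    f x y ≤ c * p.length := by
  induction p with
  | nil => simp [hself]
  | @cons u v w h p ih =>
    rw [Walk.length_cons, mul_add_one]
    linarith [hadj u v w h]

theorem exists_walk_mul_length_le (hc : 0 < c)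
    (hstep : ∀ x y, x ≠ y → ∃ w, G.Adj x w ∧ f w y + c ≤ f x y) (x y : V) :
    ∃ p : G.Walk x y, c * p.length ≤ f x y := by
  induction hn : f x y using Nat.strong_induction_on generalizing x with
  | _ n ih =>
    by_cases hxy : x = y
    · subst hxy
      exact ⟨Walk.nil, by simp⟩
    · obtain ⟨w, hxw, hw⟩ := hstep x y hxy
      obtain ⟨p, hp⟩ := ih (f w y) (by omega) w rfl
      exact ⟨Walk.cons hxw p, by rw [Walk.length_cons, mul_add_one]; omega⟩

theorem reachable_and_mul_dist_eq (hc : 0 < c) (hself : ∀ x, f x x = 0)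
    (hadj : ∀ x y z, G.Adj x y → f x z ≤ c + f y z)
    (hstep : ∀ x y, x ≠ y → ∃ w, G.Adj x w ∧ f w y + c ≤ f x y) (x y : V) :
    G.Reachable x y ∧ c * G.dist x y = f x y := by
  obtain ⟨p, hp⟩ := exists_walk_mul_length_le hc hstep x y
  obtain ⟨q, hq⟩ := Reachable.exists_walk_length_eq_dist ⟨p⟩
  refine ⟨⟨p⟩, le_antisymm ((Nat.mul_le_mul_left c (dist_le p)).trans hp) ?_⟩
  rw [← hq]
  exact le_mul_length_of_adj hself hadj q

end SimpleGraph

theorem sup_inf_eq_of_le_of_inf_le {α : Type*} [Lattice α] [IsModularLattice α] {a b x : α}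
    (ha : a ≤ x) (hb : b ⊓ x ≤ a) : (a ⊔ b) ⊓ x = a := by
  rw [sup_inf_assoc_of_le b ha, sup_eq_left.mpr hb]

namespace Submodule

variable {K V : Type*} [DivisionRing K] [AddCommGroup V] [Module K V]

noncomputable def subspaceDist (y z : Submodule K V) : ℕ :=
  finrank K y + finrank K z - 2 * finrank K ↥(y ⊓ z)

@[simp]
theorem subspaceDist_self (y : Submodule K V) : subspaceDist y y = 0 := by
  rw [subspaceDist, inf_idem]
  omega

theorem finrank_span_singleton_le (v : V) : finrank K (K ∙ v) ≤ 1 :=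
  (finrank_span_le_card ({v} : Set V)).trans (by simp)

variable [FiniteDimensional K V]

theorem subspaceDist_add_two_mul (y z : Submodule K V) :
    subspaceDist y z + 2 * finrank K ↥(y ⊓ z) = finrank K y + finrank K z := by
  have := finrank_mono (inf_le_left : y ⊓ z ≤ y)
  have := finrank_mono (inf_le_right : y ⊓ z ≤ z)
  unfold subspaceDist
  omega

theorem subspaceDist_add_finrank_inf (y z : Submodule K V) :
    subspaceDist y z + finrank K ↥(y ⊓ z) = finrank K ↥(y ⊔ z) := by
  have := finrank_sup_add_finrank_inf_eq y z
  have := subspaceDist_add_two_mul y z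
  omega

theorem finrank_inf_add_finrank_inf_le (x y z : Submodule K V) :
    finrank K ↥(x ⊓ y) + finrank K ↥(y ⊓ z) ≤ finrank K y + finrank K ↥(x ⊓ z) := by
  rw [← finrank_sup_add_finrank_inf_eq]
  gcongr
  · exact finrank_mono (sup_le inf_le_right inf_le_left)
  · exact finrank_mono
      (le_inf (inf_le_left.trans inf_le_left) (inf_le_right.trans inf_le_right))

theorem subspaceDist_triangle (x y z : Submodule K V) :
    subspaceDist x z ≤ subspaceDist x y + subspaceDist y z := by
  have := finrank_inf_add_finrank_inf_le x y z
  have := subspaceDist_add_two_mul x y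
  have := subspaceDist_add_two_mul y z
  have := subspaceDist_add_two_mul x z
  omega

theorem finrank_sup_span_singleton_le (p : Submodule K V) (v : V) :
    finrank K ↥(p ⊔ K ∙ v) ≤ finrank K p + 1 :=
  (finrank_add_le_finrank_add_finrank _ _).trans
    (Nat.add_le_add_left (finrank_span_singleton_le v) _)

theorem exists_finrank_eq_of_le {U W : Submodule K V} (hUW : U ≤ W) {n : ℕ}
    (hU : finrank K U ≤ n) (hW : n ≤ finrank K W) :
    ∃ Z : Submodule K V, U ≤ Z ∧ Z ≤ W ∧ finrank K Z = n := by
  induction n, hU using Nat.le_induction with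
  | base => exact ⟨U, le_rfl, hUW, rfl⟩
  | succ n hn ih =>
    obtain ⟨Z, hUZ, hZW, hZ⟩ := ih (by omega)
    obtain ⟨v, hvW, hvZ⟩ := SetLike.exists_of_lt (lt_of_le_of_ne hZW (by rintro rfl; omega))
    have hlt : Z < Z ⊔ K ∙ v :=
      lt_of_le_of_ne le_sup_left fun h => hvZ (h ▸ mem_sup_right (mem_span_singleton_self v))
    refine ⟨Z ⊔ K ∙ v, hUZ.trans le_sup_left,
      sup_le hZW ((span_singleton_le_iff_mem v W).mpr hvW), ?_⟩
    have := finrank_lt_finrank_of_lt hlt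
    have := finrank_sup_span_singleton_le Z v
    omega

theorem finrank_inf_lt_of_ne {x y : Submodule K V} (h : finrank K x = finrank K y)
    (hne : x ≠ y) : finrank K ↥(x ⊓ y) < finrank K x := by
  by_contra! hle
  have hxy : x ≤ y := (eq_of_le_of_finrank_le inf_le_left hle) ▸ inf_le_right
  exact hne (eq_of_le_of_finrank_eq hxy h)

theorem finrank_inf_add_one_of_not_le {x H : Submodule K V}
    (hH : finrank K H + 1 = finrank K V) (hxH : ¬x ≤ H) :
    finrank K ↥(x ⊓ H) + 1 = finrank K x := by
  have := finrank_sup_add_finrank_inf_eq x H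
  have := finrank_le (x ⊔ H)
  have := finrank_lt_finrank_of_lt (lt_of_le_of_ne le_sup_right
    fun h => hxH (le_sup_left.trans h.ge))
  omega

theorem exists_disjoint_finrank_eq_not_le {Z H : Submodule K V} (hZH : Z ≤ H) (hH : H ≠ ⊤)
    {m : ℕ} (hm : 1 ≤ m) (hZm : finrank K Z + m ≤ finrank K V) :
    ∃ Y : Submodule K V, Disjoint Y Z ∧ finrank K Y = m ∧ ¬Y ≤ H := by
  obtain ⟨C, hC⟩ := Z.exists_isCompl
  have hCH : ¬C ≤ H := fun h => hH (eq_top_iff.mpr (hC.sup_eq_top ▸ sup_le hZH h))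
  obtain ⟨v, hvC, hvH⟩ := SetLike.not_le_iff_exists.mp hCH
  have := finrank_add_eq_of_isCompl hC
  obtain ⟨Y, hvY, hYC, hY⟩ := exists_finrank_eq_of_le ((span_singleton_le_iff_mem v C).mpr hvC)
    ((finrank_span_singleton_le v).trans hm) (n := m) (by omega)
  exact ⟨Y, hC.disjoint.symm.mono_left hYC, hY,
    fun h => hvH (h (hvY (mem_span_singleton_self v)))⟩

section Geodesic

variable {x y x' y' : Submodule K V}

theorem finrank_sup_add_finrank_inf_of_le (hx'₁ : x ⊓ y ≤ x') (hx'₂ : x' ≤ x)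
    (hy'₁ : x ⊓ y ≤ y') (hy'₂ : y' ≤ y) :
    finrank K ↥(x' ⊔ y') + finrank K ↥(x ⊓ y) = finrank K x' + finrank K y' := by
  have hinf : x' ⊓ y' = x ⊓ y := le_antisymm (inf_le_inf hx'₂ hy'₂) (le_inf hx'₁ hy'₁)
  rw [← hinf, finrank_sup_add_finrank_inf_eq]

theorem subspaceDist_sup_of_le (hx'₁ : x ⊓ y ≤ x') (hx'₂ : x' ≤ x)
    (hy'₁ : x ⊓ y ≤ y') (hy'₂ : y' ≤ y) :
    subspaceDist x (x' ⊔ y') =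
        finrank K x - finrank K x' + (finrank K y' - finrank K ↥(x ⊓ y)) ∧
      subspaceDist x (x' ⊔ y') + subspaceDist (x' ⊔ y') y = subspaceDist x y := by
  have hx : x ⊓ (x' ⊔ y') = x' := by
    rw [inf_comm]
    exact sup_inf_eq_of_le_of_inf_le hx'₂
      ((inf_le_inf_right x hy'₂).trans (inf_comm y x ▸ hx'₁))
  have hy : (x' ⊔ y') ⊓ y = y' := by
    rw [sup_comm]
    exact sup_inf_eq_of_le_of_inf_le hy'₂ ((inf_le_inf_right y hx'₂).trans hy'₁)
  have hxw := subspaceDist_add_two_mul x (x' ⊔ y')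
  have hwy := subspaceDist_add_two_mul (x' ⊔ y') y
  rw [hx] at hxw
  rw [hy] at hwy
  have := finrank_sup_add_finrank_inf_of_le hx'₁ hx'₂ hy'₁ hy'₂
  have := subspaceDist_add_two_mul x y
  have := finrank_mono hx'₂
  have := finrank_mono hy'₁
  omega

end Geodesic

end Submodule

section TwistedGrassmann

open Submodule

variable {F : Type} [Field F] {D : ℕ} {H : Submodule F (Fin (2 * D + 1) → F)}

theorem twistedGrassmann_adj_iff {x y : TGVertex F D H} :
    (twistedGrassmann F D H).Adj x y ↔ subspaceDist x.1 y.1 = 2 := by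
  have := subspaceDist_add_two_mul x.1 y.1
  change finrank F x.1 + finrank F y.1 = 2 * finrank F ↥(x.1 ⊓ y.1) + 2 ↔ _
  omega

namespace TGVertex

theorem exists_adj_closer_of_sup {x y w : TGVertex F D H}
    {x' y' : Submodule F (Fin (2 * D + 1) → F)} (hw : w.1 = x' ⊔ y')
    (hx'₁ : x.1 ⊓ y.1 ≤ x') (hx'₂ : x' ≤ x.1) (hy'₁ : x.1 ⊓ y.1 ≤ y') (hy'₂ : y' ≤ y.1)
    (hstep : finrank F x.1 - finrank F x' + (finrank F y' - finrank F ↥(x.1 ⊓ y.1)) = 2) :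
    ∃ w : TGVertex F D H, (twistedGrassmann F D H).Adj x w ∧
      subspaceDist w.1 y.1 + 2 ≤ subspaceDist x.1 y.1 := by
  obtain ⟨h₁, h₂⟩ := subspaceDist_sup_of_le hx'₁ hx'₂ hy'₁ hy'₂
  rw [← hw] at h₁ h₂
  exact ⟨w, twistedGrassmann_adj_iff.mpr (h₁.trans hstep), by omega⟩

theorem exists_adj_closer_of_not_le_of_not_le {x y : TGVertex F D H} (hxy : x ≠ y)
    (hx : finrank F x.1 = D + 1) (hy : finrank F y.1 = D + 1) (hyH : ¬y.1 ≤ H) :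
    ∃ w : TGVertex F D H, (twistedGrassmann F D H).Adj x w ∧
      subspaceDist w.1 y.1 + 2 ≤ subspaceDist x.1 y.1 := by
  have hk := finrank_inf_lt_of_ne (hx.trans hy.symm) (Subtype.coe_injective.ne hxy)
  have hyx : ¬y.1 ≤ x.1 := fun h => by rw [inf_eq_right.mpr h] at hk; omega
  obtain ⟨u, huy, hu⟩ := Set.not_subset.mp
    (AddSubgroupClass.subset_union.not.mpr (not_or.mpr ⟨hyx, hyH⟩))
  have := finrank_sup_span_singleton_le (x.1 ⊓ y.1) u
  obtain ⟨x', hx'₁, hx'₂, hx'⟩ := exists_finrank_eq_of_le (inf_le_left : x.1 ⊓ y.1 ≤ x.1)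
    (n := D) (by omega) (by omega)
  obtain ⟨y', huy', hy'₂, hy'⟩ := exists_finrank_eq_of_le
    (sup_le inf_le_right ((span_singleton_le_iff_mem u y.1).mpr huy) : x.1 ⊓ y.1 ⊔ F ∙ u ≤ y.1)
    (n := finrank F ↥(x.1 ⊓ y.1) + 1) (by omega) (by omega)
  have hy'₁ : x.1 ⊓ y.1 ≤ y' := le_sup_left.trans huy'
  have hw := finrank_sup_add_finrank_inf_of_le hx'₁ hx'₂ hy'₁ hy'₂
  have huw : u ∈ x' ⊔ y' := mem_sup_right (huy' (mem_sup_right (mem_span_singleton_self u)))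
  exact exists_adj_closer_of_sup (w := ⟨x' ⊔ y', .inl ⟨by omega, fun h => hu (.inr (h huw))⟩⟩)
    rfl hx'₁ hx'₂ hy'₁ hy'₂ (by omega)

theorem exists_adj_closer_of_not_le_of_le (hD : 1 ≤ D) (hH : finrank F H = 2 * D)
    {x y : TGVertex F D H} (hx : finrank F x.1 = D + 1) (hxH : ¬x.1 ≤ H)
    (hy : finrank F y.1 = D - 1) (hyH : y.1 ≤ H) :
    ∃ w : TGVertex F D H, (twistedGrassmann F D H).Adj x w ∧
      subspaceDist w.1 y.1 + 2 ≤ subspaceDist x.1 y.1 := by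
  have hxH' := finrank_inf_add_one_of_not_le (by rw [hH, finrank_fin_fun]) hxH
  have hk := finrank_mono (inf_le_right : x.1 ⊓ y.1 ≤ y.1)
  obtain ⟨x', hx'₁, hx'H, hx'⟩ := exists_finrank_eq_of_le (inf_le_inf_left x.1 hyH)
    (n := D - 1) (by omega) (by omega)
  have hx'₂ : x' ≤ x.1 := hx'H.trans inf_le_left
  have hw := finrank_sup_add_finrank_inf_of_le hx'₁ hx'₂ le_rfl inf_le_right
  exact exists_adj_closer_of_sup (w := ⟨x' ⊔ x.1 ⊓ y.1, .inr ⟨by omega,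
      sup_le (hx'H.trans inf_le_right) (inf_le_right.trans hyH)⟩⟩)
    rfl hx'₁ hx'₂ le_rfl inf_le_right (by omega)

theorem exists_adj_closer_of_le_of_not_le (hD : 1 ≤ D) {x y : TGVertex F D H}
    (hx : finrank F x.1 = D - 1) (hy : finrank F y.1 = D + 1) (hyH : ¬y.1 ≤ H) :
    ∃ w : TGVertex F D H, (twistedGrassmann F D H).Adj x w ∧
      subspaceDist w.1 y.1 + 2 ≤ subspaceDist x.1 y.1 := by
  have hk := finrank_mono (inf_le_left : x.1 ⊓ y.1 ≤ x.1)
  obtain ⟨u, huy, huH⟩ := SetLike.not_le_iff_exists.mp hyH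
  have := finrank_sup_span_singleton_le (x.1 ⊓ y.1) u
  obtain ⟨y', huy', hy'₂, hy'⟩ := exists_finrank_eq_of_le
    (sup_le inf_le_right ((span_singleton_le_iff_mem u y.1).mpr huy) : x.1 ⊓ y.1 ⊔ F ∙ u ≤ y.1)
    (n := finrank F ↥(x.1 ⊓ y.1) + 2) (by omega) (by omega)
  have hy'₁ : x.1 ⊓ y.1 ≤ y' := le_sup_left.trans huy'
  have hw := finrank_sup_add_finrank_inf_of_le inf_le_left le_rfl hy'₁ hy'₂
  have huw : u ∈ x.1 ⊔ y' := mem_sup_right (huy' (mem_sup_right (mem_span_singleton_self u)))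
  exact exists_adj_closer_of_sup (w := ⟨x.1 ⊔ y', .inl ⟨by omega, fun h => huH (h huw)⟩⟩)
    rfl inf_le_left le_rfl hy'₁ hy'₂ (by omega)

theorem exists_adj_closer_of_le_of_le {x y : TGVertex F D H} (hxy : x ≠ y)
    (hx : finrank F x.1 = D - 1) (hxH : x.1 ≤ H) (hy : finrank F y.1 = D - 1) (hyH : y.1 ≤ H) :
    ∃ w : TGVertex F D H, (twistedGrassmann F D H).Adj x w ∧
      subspaceDist w.1 y.1 + 2 ≤ subspaceDist x.1 y.1 := by
  have hk := finrank_inf_lt_of_ne (hx.trans hy.symm) (Subtype.coe_injective.ne hxy)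
  obtain ⟨x', hx'₁, hx'₂, hx'⟩ := exists_finrank_eq_of_le (inf_le_left : x.1 ⊓ y.1 ≤ x.1)
    (n := D - 2) (by omega) (by omega)
  obtain ⟨y', hy'₁, hy'₂, hy'⟩ := exists_finrank_eq_of_le (inf_le_right : x.1 ⊓ y.1 ≤ y.1)
    (n := finrank F ↥(x.1 ⊓ y.1) + 1) (by omega) (by omega)
  have hw := finrank_sup_add_finrank_inf_of_le hx'₁ hx'₂ hy'₁ hy'₂
  exact exists_adj_closer_of_sup (w := ⟨x' ⊔ y', .inr ⟨by omega,
      sup_le (hx'₂.trans hxH) (hy'₂.trans hyH)⟩⟩) rfl hx'₁ hx'₂ hy'₁ hy'₂ (by omega)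

theorem exists_adj_closer (hD : 1 ≤ D) (hH : finrank F H = 2 * D) {x y : TGVertex F D H}
    (hxy : x ≠ y) : ∃ w : TGVertex F D H, (twistedGrassmann F D H).Adj x w ∧
      subspaceDist w.1 y.1 + 2 ≤ subspaceDist x.1 y.1 := by
  rcases x.2 with ⟨hx, hxH⟩ | ⟨hx, hxH⟩ <;> rcases y.2 with ⟨hy, hyH⟩ | ⟨hy, hyH⟩
  · exact exists_adj_closer_of_not_le_of_not_le hxy hx hy hyH
  · exact exists_adj_closer_of_not_le_of_le hD hH hx hxH hy hyH
  · exact exists_adj_closer_of_le_of_not_le hD hx hy hyH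
  · exact exists_adj_closer_of_le_of_le hxy hx hxH hy hyH

theorem reachable_and_two_mul_dist_eq (hD : 1 ≤ D) (hH : finrank F H = 2 * D)
    (x y : TGVertex F D H) : (twistedGrassmann F D H).Reachable x y ∧
      2 * (twistedGrassmann F D H).dist x y = subspaceDist x.1 y.1 :=
  SimpleGraph.reachable_and_mul_dist_eq two_pos (fun x => subspaceDist_self x.1)
    (fun x y z hxy => (subspaceDist_triangle x.1 y.1 z.1).trans_eq
      (by rw [twistedGrassmann_adj_iff.mp hxy]))
    (fun _ _ => exists_adj_closer hD hH) x y

end TGVertex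

end TwistedGrassmann

theorem twistedGrassmann_dist_general (F : Type) [Field F] (D : ℕ) (hD : 2 ≤ D)
    (H : Submodule F (Fin (2 * D + 1) → F)) (hH : finrank F H = 2 * D) :
    (∀ y z : TGVertex F D H, ∀ i : ℕ, i ≤ D →
        ((twistedGrassmann F D H).dist y z = i ↔
          finrank F y.1 + finrank F z.1 = 2 * finrank F ↥(y.1 ⊓ z.1) + 2 * i))
      ∧ (twistedGrassmann F D H).Connected
      ∧ (∀ y z : TGVertex F D H, (twistedGrassmann F D H).dist y z ≤ D)
      ∧ (∃ y z : TGVertex F D H, (twistedGrassmann F D H).dist y z = D) := by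
  have hdist := TGVertex.reachable_and_two_mul_dist_eq (by omega : 1 ≤ D) hH
  have hV : finrank F (Fin (2 * D + 1) → F) = 2 * D + 1 := finrank_fin_fun F
  obtain ⟨z, -, hzH, hz⟩ := Submodule.exists_finrank_eq_of_le (bot_le : ⊥ ≤ H) (n := D - 1)
    (by simp) (by omega)
  obtain ⟨y, hyz, hy, hyH⟩ := Submodule.exists_disjoint_finrank_eq_not_le hzH
    (fun h => by rw [h, finrank_top] at hH; omega) (m := D + 1) (by omega) (by omega)
  let y₀ : TGVertex F D H := ⟨y, .inl ⟨hy, hyH⟩⟩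
  let z₀ : TGVertex F D H := ⟨z, .inr ⟨hz, hzH⟩⟩
  refine ⟨fun x x' i _ => ?_,
    (SimpleGraph.connected_iff_exists_forall_reachable _).mpr ⟨y₀, fun x => (hdist y₀ x).1⟩,
    fun x x' => ?_, ⟨y₀, z₀, ?_⟩⟩
  · have := (hdist x x').2
    have := Submodule.subspaceDist_add_two_mul x.1 x'.1
    omega
  · have := (hdist x x').2
    have := Submodule.subspaceDist_add_finrank_inf x.1 x'.1
    have := Submodule.finrank_le (x.1 ⊔ x'.1)
    omega
  · have h₁ : 2 * (twistedGrassmann F D H).dist y₀ z₀ = Submodule.subspaceDist y z :=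
      (hdist y₀ z₀).2
    have h₂ := Submodule.subspaceDist_add_two_mul y z
    rw [hyz.eq_bot, finrank_bot] at h₂
    omega

/-- in `J̃_q(2D+1,D)`, the graph distance between `y` and `z`
equals `i` (for `0 ≤ i ≤ D`) iff `dim y + dim z - 2 dim(y ∩ z) = 2i`; in
particular the graph is connected and has diameter `D`. -/
theorem twistedGrassmann_dist (F : Type) [Field F] [Fintype F] (D : ℕ) (hD : 2 ≤ D)
    (H : Submodule F (Fin (2 * D + 1) → F)) (hH : finrank F H = 2 * D) :
    (∀ y z : TGVertex F D H, ∀ i : ℕ, i ≤ D →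
        ((twistedGrassmann F D H).dist y z = i ↔
          finrank F y.1 + finrank F z.1 = 2 * finrank F ↥(y.1 ⊓ z.1) + 2 * i))
      ∧ (twistedGrassmann F D H).Connected
      ∧ (∀ y z : TGVertex F D H, (twistedGrassmann F D H).dist y z ≤ D)
      ∧ (∃ y z : TGVertex F D H, (twistedGrassmann F D H).dist y z = D) :=
  twistedGrassmann_dist_general F D hD H hH
end
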